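/- Converse to the Riesz lower bound: if there exists a constant c > 0 such that ‖ ∑_{n∈ℤ} a_n (ξ_n − σ) ‖_{L²(ℙ)} ≥ c (∑_{n∈ℤ} |a_n|²)^{1/2} for every finitely supported complex sequence (a_n)_{n∈ℤ}, then f is not m-a.e. equal to an indicator function, i.e. ∫_𝕋 f(1−f) dm > 0. -/

import Mathlib

open MeasureTheory Complex Filter Finset
open scoped ENNReal

noncomputable def fhat (f : AddCircle (1:ℝ) → ℝ) (k : ℤ) : ℂ :=
  fourierCoeff (fun t => (f t : ℂ)) k

/-!
If `f` were a.e. an indicator function, then `∫ f² = ∫ f = σ`, so by Parseval `∑ₖ |f̂ k|² = σ`.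
For the determinantal process the variance of `∑_{|n| ≤ N} (ξₙ - σ)` is
`σ (2N+1) - ∑_{|n|,|m| ≤ N} |f̂ (n - m)|²`, and this double sum is a Fejér-type mean of `|f̂|²`,
hence equal to `(σ - o(1)) (2N+1)`. The variance is therefore `o(N)`, whereas the lower bound
applied to the indicator of `[-N, N]` makes it at least `c² (2N+1)`.
-/

open scoped ComplexConjugate

theorem fhat_zero (f : AddCircle (1:ℝ) → ℝ) :
    fhat f 0 = ((∫ t, f t ∂AddCircle.haarAddCircle : ℝ) : ℂ) := by
  simp only [fhat, fourierCoeff, neg_zero, fourier_zero, one_smul]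
  exact integral_ofReal

theorem fhat_neg (f : AddCircle (1:ℝ) → ℝ) (k : ℤ) : fhat f (-k) = conj (fhat f k) := by
  rw [fhat, fhat, fourierCoeff, fourierCoeff, ← integral_conj]
  simp only [smul_eq_mul, map_mul, conj_ofReal, ← fourier_neg, neg_neg]

theorem hasSum_norm_fhat_sq {f : AddCircle (1:ℝ) → ℝ} (hf : MemLp f 2 AddCircle.haarAddCircle) :
    HasSum (fun k => ‖fhat f k‖ ^ 2) (∫ t, f t ^ 2 ∂AddCircle.haarAddCircle) := by
  have hF := (hf.ofReal (K := ℂ)).coeFn_toLp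
  convert hasSum_sq_fourierCoeff ((hf.ofReal (K := ℂ)).toLp _) using 1
  · ext k
    simp only [fhat, fourierCoeff]
    congr 2
    exact integral_congr_ae (hF.mono fun t ht => by simp only [ht]; rfl)
  · exact integral_congr_ae (hF.mono fun t ht => by simp only [ht]; simp)

theorem memLp_of_forall_eq_zero_or_eq_one {Ω : Type*} [MeasurableSpace Ω] {P : Measure Ω}
    [IsFiniteMeasure P] {X : Ω → ℝ} (hX : Measurable X) (h01 : ∀ ω, X ω = 0 ∨ X ω = 1)
    (p : ℝ≥0∞) : MemLp X p P :=
  .of_bound hX.aestronglyMeasurable 1 <| ae_of_all _ fun ω => by rcases h01 ω with h | h <;> simp [h]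

def IsDeterminantal {Ω : Type*} [MeasurableSpace Ω] (P : Measure Ω) (ξ : ℤ → Ω → ℝ)
    (K : ℤ → ℂ) : Prop :=
  ∀ (k : ℕ) (n : Fin k → ℤ), Function.Injective n →
    ((∫ ω, ∏ i, ξ (n i) ω ∂P : ℝ) : ℂ) = Matrix.det (Matrix.of fun i j => K (n i - n j))

namespace IsDeterminantal

variable {Ω : Type*} [MeasurableSpace Ω] {P : Measure Ω} {ξ : ℤ → Ω → ℝ} {K : ℤ → ℂ}

theorem ofReal_integral (hξ : IsDeterminantal P ξ K) (n : ℤ) :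
    ((∫ ω, ξ n ω ∂P : ℝ) : ℂ) = K 0 := by
  simpa using hξ 1 (fun _ => n) (Function.injective_of_subsingleton _)

theorem ofReal_integral_mul (hξ : IsDeterminantal P ξ K) {n m : ℤ} (hnm : n ≠ m) :
    ((∫ ω, ξ n ω * ξ m ω ∂P : ℝ) : ℂ) = K 0 * K 0 - K (n - m) * K (m - n) := by
  have hinj : Function.Injective ![n, m] := by
    intro i j; fin_cases i <;> fin_cases j <;> simp [hnm, hnm.symm]
  simpa [Matrix.det_fin_two] using hξ 2 ![n, m] hinj

variable {σ : ℝ} (hK0 : K 0 = σ) (hK : ∀ k, K (-k) = conj (K k))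
include hK0

theorem integral_eq (hξ : IsDeterminantal P ξ K) (n : ℤ) : ∫ ω, ξ n ω ∂P = σ := by
  exact_mod_cast (hξ.ofReal_integral n).trans hK0

include hK

theorem integral_mul (hξ : IsDeterminantal P ξ K) {n m : ℤ} (hnm : n ≠ m) :
    ∫ ω, ξ n ω * ξ m ω ∂P = σ ^ 2 - ‖K (n - m)‖ ^ 2 := by
  have h := hξ.ofReal_integral_mul hnm
  rw [show m - n = -(n - m) by ring, hK, mul_conj, hK0, normSq_eq_norm_sq] at h
  rw [sq]
  exact_mod_cast h

variable [IsProbabilityMeasure P]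

theorem integral_sub_mul_sub (hξ : IsDeterminantal P ξ K) (hmeas : ∀ n, Measurable (ξ n))
    (h01 : ∀ n ω, ξ n ω = 0 ∨ ξ n ω = 1) (n m : ℤ) :
    ∫ ω, (ξ n ω - σ) * (ξ m ω - σ) ∂P = (if n = m then σ else 0) - ‖K (n - m)‖ ^ 2 := by
  have hint : ∀ n, Integrable (ξ n) P := fun n =>
    memLp_one_iff_integrable.1 (memLp_of_forall_eq_zero_or_eq_one (hmeas n) (h01 n) 1)
  have hint_mul : Integrable (fun ω => ξ n ω * ξ m ω) P :=
    memLp_one_iff_integrable.1 <| memLp_of_forall_eq_zero_or_eq_one ((hmeas n).mul (hmeas m))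
      (fun ω => by rcases h01 n ω with h | h <;> rcases h01 m ω with h' | h' <;> simp [h, h']) 1
  have hexpand : ∫ ω, (ξ n ω - σ) * (ξ m ω - σ) ∂P = ∫ ω, ξ n ω * ξ m ω ∂P - σ ^ 2 := by
    have h1 : Integrable (fun ω => ξ n ω * ξ m ω - σ * ξ n ω) P :=
      hint_mul.sub ((hint n).const_mul σ)
    have h2 : Integrable (fun ω => σ * ξ m ω - σ ^ 2) P :=
      ((hint m).const_mul σ).sub (integrable_const _)
    have : (fun ω => (ξ n ω - σ) * (ξ m ω - σ)) =
        fun ω => ξ n ω * ξ m ω - σ * ξ n ω - (σ * ξ m ω - σ ^ 2) := by ext; ring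
    rw [this, integral_sub h1 h2, integral_sub hint_mul ((hint n).const_mul σ),
      integral_sub ((hint m).const_mul σ) (integrable_const _), integral_const_mul,
      integral_const_mul, hξ.integral_eq hK0, hξ.integral_eq hK0, integral_const]
    simp only [probReal_univ, one_smul]
    ring
  rw [hexpand]
  split_ifs with hnm
  · subst hnm
    have hidem : (fun ω => ξ n ω * ξ n ω) = ξ n := by
      ext ω; rcases h01 n ω with h | h <;> simp [h]
    rw [hidem, hξ.integral_eq hK0, sub_self, hK0, norm_real, Real.norm_eq_abs, sq_abs]
  · rw [hξ.integral_mul hK0 hK hnm]; ring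

theorem integral_sum_sub_sq (hξ : IsDeterminantal P ξ K) (hmeas : ∀ n, Measurable (ξ n))
    (h01 : ∀ n ω, ξ n ω = 0 ∨ ξ n ω = 1) (s : Finset ℤ) :
    ∫ ω, (∑ n ∈ s, (ξ n ω - σ)) ^ 2 ∂P = σ * #s - ∑ n ∈ s, ∑ m ∈ s, ‖K (n - m)‖ ^ 2 := by
  have hint : ∀ n m, Integrable (fun ω => (ξ n ω - σ) * (ξ m ω - σ)) P := fun n m =>
    ((memLp_of_forall_eq_zero_or_eq_one (hmeas n) (h01 n) 2).sub (memLp_const σ)).integrable_mul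
      ((memLp_of_forall_eq_zero_or_eq_one (hmeas m) (h01 m) 2).sub (memLp_const σ))
  have hsq : ∀ ω, (∑ n ∈ s, (ξ n ω - σ)) ^ 2 = ∑ n ∈ s, ∑ m ∈ s, (ξ n ω - σ) * (ξ m ω - σ) :=
    fun ω => by rw [sq, sum_mul_sum]
  simp_rw [hsq]
  rw [integral_finsetSum _ fun n _ => integrable_finsetSum _ fun m _ => hint n m]
  simp_rw [integral_finsetSum _ fun m _ => hint _ m, hξ.integral_sub_mul_sub hK0 hK hmeas h01,
    sum_sub_distrib, sum_ite_eq, sum_ite_mem, inter_self, sum_const, nsmul_eq_mul, mul_comm]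

end IsDeterminantal

section LowerBound

variable {Ω : Type*} [MeasurableSpace Ω] {P : Measure Ω}

theorem sq_le_integral_norm_sq_of_ofReal_le_eLpNorm {E : Type*} [NormedAddCommGroup E]
    {g : Ω → E} (hg : MemLp g 2 P) {x : ℝ} (hx : 0 ≤ x)
    (h : ENNReal.ofReal x ≤ eLpNorm g 2 P) : x ^ 2 ≤ ∫ ω, ‖g ω‖ ^ 2 ∂P := by
  rw [hg.eLpNorm_eq_integral_rpow_norm two_ne_zero ENNReal.ofNat_ne_top,
    ENNReal.ofReal_le_ofReal_iff (by positivity)] at h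
  simp only [ENNReal.toReal_ofNat, Real.rpow_two, ← one_div, ← Real.sqrt_eq_rpow] at h
  exact (Real.le_sqrt hx (by positivity)).1 h

theorem sq_mul_card_le_integral_sum_sub_sq [IsFiniteMeasure P] {ξ : ℤ → Ω → ℝ}
    (hξ : ∀ n, MemLp (ξ n) 2 P) {σ c : ℝ} (hc : 0 ≤ c)
    (h : ∀ a : ℤ →₀ ℂ, ENNReal.ofReal (c * Real.sqrt (∑ n ∈ a.support, ‖a n‖ ^ 2)) ≤
      eLpNorm (fun ω => ∑ n ∈ a.support, a n * ((ξ n ω : ℂ) - (σ : ℂ))) 2 P)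
    (s : Finset ℤ) : c ^ 2 * #s ≤ ∫ ω, (∑ n ∈ s, (ξ n ω - σ)) ^ 2 ∂P := by
  let a : ℤ →₀ ℂ := Finsupp.indicator s fun _ _ => 1
  have ha : a.support = s := by ext; simp [a]
  have hcard : ∑ n ∈ a.support, ‖a n‖ ^ 2 = #s := by simp [ha, a, apply_ite]
  have hsum : (fun ω => ∑ n ∈ a.support, a n * ((ξ n ω : ℂ) - σ)) =
      fun ω => ((∑ n ∈ s, (ξ n ω - σ) : ℝ) : ℂ) := by
    ext ω; simp [ha, a]
  have hmem : MemLp (fun ω => ((∑ n ∈ s, (ξ n ω - σ) : ℝ) : ℂ)) 2 P :=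
    (memLp_finsetSum s fun n _ => (hξ n).sub (memLp_const σ)).ofReal
  have key := sq_le_integral_norm_sq_of_ofReal_le_eLpNorm hmem
    (x := c * √(#s : ℝ)) (by positivity) (by rw [← hcard, ← hsum]; exact h a)
  rw [mul_pow, Real.sq_sqrt (by positivity)] at key
  simpa only [norm_real, Real.norm_eq_abs, sq_abs] using key

end LowerBound

theorem mul_sum_Icc_le_sum_Icc_sum_Icc_sub {g : ℤ → ℝ} (hg : ∀ k, 0 ≤ g k) {M N : ℕ}
    (hMN : M ≤ N) :
    (2 * ((N : ℝ) - M) + 1) * ∑ k ∈ Icc (-(M : ℤ)) M, g k ≤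
      ∑ n ∈ Icc (-(N : ℤ)) N, ∑ m ∈ Icc (-(N : ℤ)) N, g (n - m) := by
  set L : Finset ℤ := Icc (-((N : ℤ) - M)) (N - M)
  have hL : (#L : ℝ) = 2 * ((N : ℝ) - M) + 1 := by
    rw [Int.card_Icc, show (N : ℤ) - M + 1 - -(N - M) = ((2 * (N - M) + 1 : ℕ) : ℤ) by omega,
      Int.toNat_natCast]
    push_cast [hMN]
    ring
  rw [← hL, ← nsmul_eq_mul, ← sum_const]
  -- the pairs `(m + k, m)` with `m ∈ L`, `|k| ≤ M` are distinct and have both entries in `[-N, N]`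
  calc ∑ m ∈ L, ∑ k ∈ Icc (-(M : ℤ)) M, g k
      = ∑ m ∈ L, ∑ n ∈ (Icc (-(M : ℤ)) M).map (addRightEmbedding m), g (n - m) := by
        simp only [sum_map, addRightEmbedding_apply, add_sub_cancel_right]
    _ ≤ ∑ m ∈ L, ∑ n ∈ Icc (-(N : ℤ)) N, g (n - m) := by
        refine sum_le_sum fun m hm => sum_le_sum_of_subset_of_nonneg ?_ fun _ _ _ => hg _
        rw [map_add_right_Icc]
        rw [mem_Icc] at hm
        exact Icc_subset_Icc (by omega) (by omega)
    _ ≤ ∑ m ∈ Icc (-(N : ℤ)) N, ∑ n ∈ Icc (-(N : ℤ)) N, g (n - m) :=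
        sum_le_sum_of_subset_of_nonneg (Icc_subset_Icc (by omega) (by omega))
          fun _ _ _ => sum_nonneg fun _ _ => hg _
    _ = ∑ n ∈ Icc (-(N : ℤ)) N, ∑ m ∈ Icc (-(N : ℤ)) N, g (n - m) := sum_comm

theorem HasSum.eventually_mul_sub_sum_Icc_sum_Icc_sub_lt {g : ℤ → ℝ} {σ ε : ℝ}
    (hg : ∀ k, 0 ≤ g k) (hs : HasSum g σ) (hε : 0 < ε) :
    ∀ᶠ N : ℕ in atTop, σ * (2 * N + 1) - ∑ n ∈ Icc (-(N : ℤ)) N, ∑ m ∈ Icc (-(N : ℤ)) N,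
      g (n - m) < ε * (2 * N + 1) := by
  obtain ⟨M, hM⟩ := ((hs.comp tendsto_Icc_neg).eventually
    (lt_mem_nhds (show σ - ε / 2 < σ by linarith))).exists
  set T := ∑ k ∈ Icc (-(M : ℤ)) M, g k
  have hTσ : T ≤ σ := sum_le_hasSum _ (fun k _ => hg k) hs
  have hT0 : 0 ≤ T := sum_nonneg fun k _ => hg k
  filter_upwards [eventually_ge_atTop M,
    tendsto_natCast_atTop_atTop.eventually_ge_atTop (2 * M * σ / ε)] with N hMN hN
  have hcount := mul_sum_Icc_le_sum_Icc_sum_Icc_sub hg hMN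
  rw [div_le_iff₀ hε] at hN
  simp only [Function.comp_apply] at hM
  nlinarith

theorem stmt_12_general
    (f : AddCircle (1:ℝ) → ℝ) (hf_meas : Measurable f)
    (hf01 : ∀ t, f t ∈ Set.Icc (0:ℝ) 1)
    (σ : ℝ) (hσ : σ = ∫ t, f t ∂AddCircle.haarAddCircle)
    {Ω : Type*} [MeasurableSpace Ω] (P : Measure Ω) [IsProbabilityMeasure P]
    (ξ : ℤ → Ω → ℝ) (hξ_meas : ∀ n, Measurable (ξ n))
    (hξ01 : ∀ n ω, ξ n ω = 0 ∨ ξ n ω = 1)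
    (hDPP : ∀ (k : ℕ) (n : Fin k → ℤ), Function.Injective n →
      ((∫ ω, ∏ i, ξ (n i) ω ∂P : ℝ) : ℂ) =
        Matrix.det (Matrix.of fun i j => fhat f (n i - n j)))
    (h : ∃ c : ℝ, 0 < c ∧ ∀ a : ℤ →₀ ℂ,
      ENNReal.ofReal (c * Real.sqrt (∑ n ∈ a.support, ‖a n‖^2)) ≤
        eLpNorm (fun ω => ∑ n ∈ a.support, a n * ((ξ n ω : ℂ) - (σ:ℂ))) 2 P) :
    0 < ∫ t, f t * (1 - f t) ∂AddCircle.haarAddCircle := by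
  obtain ⟨c, hc, hlower⟩ := h
  have hf : ∀ p, MemLp f p AddCircle.haarAddCircle := fun p =>
    .of_bound hf_meas.aestronglyMeasurable 1 <| ae_of_all _ fun t => by
      simpa [abs_le] using ⟨by linarith [(hf01 t).1], (hf01 t).2⟩
  have hsplit : ∫ t, f t * (1 - f t) ∂AddCircle.haarAddCircle =
      σ - ∫ t, f t ^ 2 ∂AddCircle.haarAddCircle := by
    rw [hσ, ← integral_sub (memLp_one_iff_integrable.1 (hf 1)) (hf 2).integrable_sq]
    congr 1 with t; ring
  refine lt_of_le_of_ne (integral_nonneg fun t => mul_nonneg (hf01 t).1 (by linarith [(hf01 t).2]))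
    fun hzero => ?_
  have hparseval : HasSum (fun k => ‖fhat f k‖ ^ 2) σ := by
    have hsq : ∫ t, f t ^ 2 ∂AddCircle.haarAddCircle = σ := by linarith
    exact hsq ▸ hasSum_norm_fhat_sq (hf 2)
  have hK0 : fhat f 0 = σ := by rw [fhat_zero, hσ]
  obtain ⟨N, hN⟩ := (hparseval.eventually_mul_sub_sum_Icc_sum_Icc_sub_lt (fun k => sq_nonneg _)
    (pow_pos hc 2)).exists
  have hvar := (show IsDeterminantal P ξ (fhat f) from hDPP).integral_sum_sub_sq hK0 (fhat_neg f)
    hξ_meas hξ01 (Icc (-(N : ℤ)) N)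
  have hlow := sq_mul_card_le_integral_sum_sub_sq
    (fun n => memLp_of_forall_eq_zero_or_eq_one (hξ_meas n) (hξ01 n) 2) hc.le hlower
    (Icc (-(N : ℤ)) N)
  have hcard : (#(Icc (-(N : ℤ)) N) : ℝ) = 2 * N + 1 := by
    rw [Int.card_Icc, show (N : ℤ) + 1 - -N = ((2 * N + 1 : ℕ) : ℤ) by omega, Int.toNat_natCast]
    push_cast; ring
  rw [hvar, hcard] at hlow
  linarith

/-- Converse to the Riesz lower bound: a uniform L² lower bound forces
∫ f(1−f) dm > 0, i.e. f is not a.e. an indicator function. -/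
theorem stmt_12
    (f : AddCircle (1:ℝ) → ℝ) (hf_meas : Measurable f)
    (hf01 : ∀ t, f t ∈ Set.Icc (0:ℝ) 1)
    (σ : ℝ) (hσ : σ = ∫ t, f t ∂AddCircle.haarAddCircle)
    (hσ0 : 0 < σ) (hσ1 : σ < 1)
    {Ω : Type*} [MeasurableSpace Ω] (P : Measure Ω) [IsProbabilityMeasure P]
    (ξ : ℤ → Ω → ℝ) (hξ_meas : ∀ n, Measurable (ξ n))
    (hξ01 : ∀ n ω, ξ n ω = 0 ∨ ξ n ω = 1)
    (hDPP : ∀ (k : ℕ) (n : Fin k → ℤ), Function.Injective n →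
      ((∫ ω, ∏ i, ξ (n i) ω ∂P : ℝ) : ℂ) =
        Matrix.det (Matrix.of fun i j => fhat f (n i - n j)))
    (h : ∃ c : ℝ, 0 < c ∧ ∀ a : ℤ →₀ ℂ,
      ENNReal.ofReal (c * Real.sqrt (∑ n ∈ a.support, ‖a n‖^2)) ≤
        eLpNorm (fun ω => ∑ n ∈ a.support, a n * ((ξ n ω : ℂ) - (σ:ℂ))) 2 P) :
    0 < ∫ t, f t * (1 - f t) ∂AddCircle.haarAddCircle :=
  stmt_12_general f hf_meas hf01 σ hσ P ξ hξ_meas hξ01 hDPP h
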